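/- arXiv:2003.12339 — 2 statements merged into one kernel-verified Lean document; each statement's English description precedes it below -/
import Mathlib

section
/- Let a, σ : [0,∞) → ℝ be bounded functions, let Π1, Π2 be finite measures on ℝ, and let γ, δ : [0,∞) × ℝ → (−1,∞) be measurable functions such that ln(1+γ(t,z)) and ln(1+δ(t,z)) are bounded. Define β(t) = σ²(t)/2 + ∫_ℝ [γ(t,z) − ln(1+γ(t,z))] Π1(dz) − ∫_ℝ ln(1+δ(t,z)) Π2(dz). If inf_{t≥0} ( a(t) − β(t) ) > 0, then there exists θ ∈ (0,1) such that inf_{t≥0} { a(t) − σ²(t)/2 − ∫_ℝ γ(t,z) Π1(dz) − (θ/2)·σ²(t) − (1/θ)∫_ℝ [ (1+γ(t,z))^{−θ} − 1 ] Π1(dz) − (1/θ)∫_ℝ [ (1+δ(t,z))^{−θ} − 1 ] Π2(dz) } > 0. -/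
/-!
Since `x ^ (-θ) ≤ exp (-θ log x)` for every real `x`, the second-order bound
`exp y - 1 ≤ y + y ^ 2` for `|y| ≤ 1` gives `(1/θ) ((1+γ) ^ (-θ) - 1) ≤ -log (1+γ) + θ B²` whenever
`|log (1+γ)| ≤ B` and `θ B ≤ 1`, and likewise for `δ`. Integrating, the expression in the conclusion is at
least `a - β - θ C` with `C = sup σ² / 2 + B₁² Π₁(ℝ) + B₂² Π₂(ℝ)`, so every sufficiently small
`θ > 0` works.
-/

open MeasureTheory Filter Topology Real

lemma Real.abs_le_exp_of_abs_log_le {x B : ℝ} (h : |log x| ≤ B) : |x| ≤ exp B := by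
  calc |x| ≤ exp (log |x|) := le_exp_log |x|
    _ ≤ exp B := by rw [log_abs]; exact exp_le_exp.mpr (le_of_abs_le h)

lemma Real.rpow_neg_sub_one_le {x θ : ℝ} (h : |θ * log x| ≤ 1) :
    x ^ (-θ) - 1 ≤ -(θ * log x) + (θ * log x) ^ 2 := by
  have hrpow : x ^ (-θ) ≤ exp (-(θ * log x)) :=
    calc x ^ (-θ) ≤ |x ^ (-θ)| := le_abs_self _
      _ ≤ exp (log x * -θ) := abs_rpow_le_exp_log_mul x (-θ)
      _ = exp (-(θ * log x)) := by ring_nf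
  have htaylor := (abs_le.mp (abs_exp_sub_one_sub_id_le (x := -(θ * log x))
    (by rwa [abs_neg]))).2
  rw [neg_sq] at htaylor
  linarith

lemma eventually_nhdsGT_zero_mul_lt (c : ℝ) {ε : ℝ} (hε : 0 < ε) :
    ∀ᶠ θ in 𝓝[>] (0 : ℝ), θ * c < ε := by
  refine Filter.Tendsto.eventually_lt_const hε ?_
  simpa using ((continuous_mul_const c).tendsto' 0 0 (zero_mul c)).mono_left nhdsWithin_le_nhds

section LogBounded

variable {α : Type*} [MeasurableSpace α] {μ : Measure α} [IsFiniteMeasure μ]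
  {g : α → ℝ} {B : ℝ}

lemma integrable_of_abs_log_le (hg : Measurable g) (hB : ∀ z, |log (g z)| ≤ B) :
    Integrable g μ :=
  .of_bound hg.aestronglyMeasurable _ (.of_forall fun z => abs_le_exp_of_abs_log_le (hB z))

lemma integrable_log_of_abs_log_le (hg : Measurable g) (hB : ∀ z, |log (g z)| ≤ B) :
    Integrable (fun z => log (g z)) μ :=
  .of_bound hg.log.aestronglyMeasurable B (.of_forall hB)

lemma integrable_rpow_of_abs_log_le (hg : Measurable g) (hB : ∀ z, |log (g z)| ≤ B) (θ : ℝ) :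
    Integrable (fun z => g z ^ θ) μ := by
  refine .of_bound (hg.pow_const θ).aestronglyMeasurable (exp (B * |θ|)) (.of_forall fun z => ?_)
  calc ‖g z ^ θ‖ ≤ exp (log (g z) * θ) := abs_rpow_le_exp_log_mul _ _
    _ ≤ exp (B * |θ|) := by
      rw [exp_le_exp]
      calc log (g z) * θ ≤ |log (g z) * θ| := le_abs_self _
        _ ≤ B * |θ| := by rw [abs_mul]; gcongr; exact hB z

theorem one_div_mul_integral_rpow_neg_sub_one_le (hg : Measurable g)
    (hB : ∀ z, |log (g z)| ≤ B) {θ : ℝ} (hθ : 0 < θ) (hθB : θ * B ≤ 1) :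
    1 / θ * ∫ z, (g z ^ (-θ) - 1) ∂μ ≤ -∫ z, log (g z) ∂μ + θ * (B ^ 2 * μ.real Set.univ) := by
  have hlog := integrable_log_of_abs_log_le (μ := μ) hg hB
  have hneglog : Integrable (fun z => -log (g z)) μ := hlog.neg
  have hpointwise : ∀ z, g z ^ (-θ) - 1 ≤ θ * (-log (g z) + θ * B ^ 2) := fun z => by
    have hθlog : |θ * log (g z)| ≤ θ * B := by
      rw [abs_mul, abs_of_pos hθ]; exact mul_le_mul_of_nonneg_left (hB z) hθ.le
    have hsq : (θ * log (g z)) ^ 2 ≤ (θ * B) ^ 2 := by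
      rw [← sq_abs]; exact pow_le_pow_left₀ (abs_nonneg _) hθlog 2
    linarith [rpow_neg_sub_one_le (hθlog.trans hθB)]
  have hintegral : ∫ z, (g z ^ (-θ) - 1) ∂μ
      ≤ θ * (-∫ z, log (g z) ∂μ + θ * (B ^ 2 * μ.real Set.univ)) :=
    calc ∫ z, (g z ^ (-θ) - 1) ∂μ ≤ ∫ z, θ * (-log (g z) + θ * B ^ 2) ∂μ :=
          integral_mono ((integrable_rpow_of_abs_log_le hg hB _).sub (integrable_const 1))
            ((hneglog.add (integrable_const _)).const_mul θ) hpointwise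
      _ = _ := by
          rw [integral_const_mul, integral_add hneglog (integrable_const _), integral_neg,
            integral_const, smul_eq_mul]
          ring
  rwa [one_div_mul_eq_div, div_le_iff₀' hθ]

end LogBounded

theorem choice_of_theta_general
    (a σ : ℝ → ℝ)
    (hσ : ∃ B, ∀ t ≥ (0:ℝ), |σ t| ≤ B)
    (μ1 μ2 : Measure ℝ) [IsFiniteMeasure μ1] [IsFiniteMeasure μ2]
    (γ δ : ℝ → ℝ → ℝ)
    (hγm : Measurable (Function.uncurry γ)) (hδm : Measurable (Function.uncurry δ))
    (hγb : ∃ B, ∀ t z, |Real.log (1 + γ t z)| ≤ B)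
    (hδb : ∃ B, ∀ t z, |Real.log (1 + δ t z)| ≤ B)
    (β : ℝ → ℝ)
    (hβ : ∀ t, β t = σ t ^ 2 / 2 + (∫ z, (γ t z - Real.log (1 + γ t z)) ∂μ1)
        - ∫ z, Real.log (1 + δ t z) ∂μ2)
    (hinf : ∃ m > (0:ℝ), ∀ t ≥ (0:ℝ), m ≤ a t - β t) :
    ∃ θ : ℝ, 0 < θ ∧ θ < 1 ∧ ∃ m > (0:ℝ), ∀ t ≥ (0:ℝ),
      m ≤ a t - σ t ^ 2 / 2 - (∫ z, γ t z ∂μ1) - (θ / 2) * σ t ^ 2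
        - (1 / θ) * (∫ z, ((1 + γ t z) ^ (-θ) - 1) ∂μ1)
        - (1 / θ) * (∫ z, ((1 + δ t z) ^ (-θ) - 1) ∂μ2) := by
  obtain ⟨Bσ, hBσ⟩ := hσ
  obtain ⟨B1, hB1⟩ := hγb
  obtain ⟨B2, hB2⟩ := hδb
  obtain ⟨m, hm, hmle⟩ := hinf
  obtain ⟨θ, hθ0, hθ1, hθB1, hθB2, hθC⟩ := (eventually_mem_nhdsWithin.and <|
    (eventually_nhdsGT_zero_mul_lt 1 one_pos).and <|
    (eventually_nhdsGT_zero_mul_lt B1 one_pos).and <|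
    (eventually_nhdsGT_zero_mul_lt B2 one_pos).and <|
    eventually_nhdsGT_zero_mul_lt (Bσ ^ 2 / 2 + B1 ^ 2 * μ1.real Set.univ
      + B2 ^ 2 * μ2.real Set.univ) (half_pos hm)).exists
  refine ⟨θ, hθ0, by linarith, m / 2, half_pos hm, fun t ht => ?_⟩
  have hγt : Measurable fun z => 1 + γ t z := measurable_const.add hγm.of_uncurry_left
  have hδt : Measurable fun z => 1 + δ t z := measurable_const.add hδm.of_uncurry_left
  have hγint : Integrable (γ t) μ1 :=
    integrable_const_add_iff.mp (integrable_of_abs_log_le hγt (hB1 t))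
  have hsplit := integral_sub hγint (integrable_log_of_abs_log_le (μ := μ1) hγt (hB1 t))
  have hγjump := one_div_mul_integral_rpow_neg_sub_one_le (μ := μ1) hγt (hB1 t) hθ0 hθB1.le
  have hδjump := one_div_mul_integral_rpow_neg_sub_one_le (μ := μ2) hδt (hB2 t) hθ0 hθB2.le
  have hσsq : σ t ^ 2 ≤ Bσ ^ 2 := by
    rw [← sq_abs]; exact pow_le_pow_left₀ (abs_nonneg _) (hBσ t ht) 2
  have hσθ := mul_le_mul_of_nonneg_left hσsq (half_pos hθ0).le
  have hmt := hmle t ht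
  rw [hβ t] at hmt
  linarith

/-- Choice of the exponent θ in the proof of stochastic permanence. -/
theorem choice_of_theta
    (a σ : ℝ → ℝ)
    (ha : ∃ B, ∀ t ≥ (0:ℝ), |a t| ≤ B)
    (hσ : ∃ B, ∀ t ≥ (0:ℝ), |σ t| ≤ B)
    (μ1 μ2 : Measure ℝ) [IsFiniteMeasure μ1] [IsFiniteMeasure μ2]
    (γ δ : ℝ → ℝ → ℝ)
    (hγ : ∀ t z, -1 < γ t z) (hδ : ∀ t z, -1 < δ t z)
    (hγm : Measurable (Function.uncurry γ)) (hδm : Measurable (Function.uncurry δ))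
    (hγb : ∃ B, ∀ t z, |Real.log (1 + γ t z)| ≤ B)
    (hδb : ∃ B, ∀ t z, |Real.log (1 + δ t z)| ≤ B)
    (β : ℝ → ℝ)
    (hβ : ∀ t, β t = σ t ^ 2 / 2 + (∫ z, (γ t z - Real.log (1 + γ t z)) ∂μ1)
        - ∫ z, Real.log (1 + δ t z) ∂μ2)
    (hinf : ∃ m > (0:ℝ), ∀ t ≥ (0:ℝ), m ≤ a t - β t) :
    ∃ θ : ℝ, 0 < θ ∧ θ < 1 ∧ ∃ m > (0:ℝ), ∀ t ≥ (0:ℝ),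
      m ≤ a t - σ t ^ 2 / 2 - (∫ z, γ t z ∂μ1) - (θ / 2) * σ t ^ 2
        - (1 / θ) * (∫ z, ((1 + γ t z) ^ (-θ) - 1) ∂μ1)
        - (1 / θ) * (∫ z, ((1 + δ t z) ^ (-θ) - 1) ∂μ2) :=
  choice_of_theta_general a σ hσ μ1 μ2 γ δ hγm hδm hγb hδb β hβ hinf
end

section
/- Let c > 0, ε > 0, x0 > 0 and t0 ≥ 0, and let x : [0,∞) → (0,∞) be continuous and satisfy, for all t ≥ t0, ln x(t) ≤ ln x0 + ε·t − c·∫_0^t x(s) ds. Then limsup_{t→∞} (1/t)·∫_0^t x(s) ds ≤ ε/c. -/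
/-!
With y(t) = ∫₀ᵗ x, the hypothesis says e^{c y} y' ≤ x₀ e^{εt} for large t. The left side is the
derivative of e^{c y}/c, so integrating from a time a gives
e^{c y(t)} ≤ e^{c y(a)} + (c x₀/ε)(e^{εt} − e^{εa}) ≤ (e^{c y(a)} + c x₀/ε) e^{εt}.
Hence y(t) ≤ (ε/c) t + O(1), and dividing by t bounds the limsup.
-/

open MeasureTheory Filter Real Set Topology

theorem hasDerivAt_integral_of_continuousOn_Ici {f : ℝ → ℝ} {a t : ℝ}
    (hf : ContinuousOn f (Ici a)) (ht : a < t) :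
    HasDerivAt (fun u => ∫ s in a..u, f s) (f t) t :=
  intervalIntegral.integral_hasDerivAt_right
    (hf.mono (by simp [uIcc_of_le ht.le, Icc_subset_Ici_self])).intervalIntegrable
    ((hf.mono Ioi_subset_Ici_self).stronglyMeasurableAtFilter isOpen_Ioi t ht)
    (hf.continuousAt (Ici_mem_nhds ht))

theorem exp_mul_le_of_log_le {u v r s : ℝ} (hu : 0 < u) (hv : 0 < v)
    (h : log u ≤ log v + s - r) : exp r * u ≤ v * exp s := by
  rw [log_le_iff_le_exp hu, exp_sub, exp_add, exp_log hv, le_div_iff₀ (exp_pos r)] at h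
  linarith

theorem exp_mul_le_of_exp_mul_deriv_le {y y' : ℝ → ℝ} {a c ε K : ℝ} (hc : 0 < c) (hε : ε ≠ 0)
    (hy : ∀ t ≥ a, HasDerivAt y (y' t) t)
    (hle : ∀ t ≥ a, exp (c * y t) * y' t ≤ K * exp (ε * t)) :
    ∀ t ≥ a, exp (c * y t) ≤ exp (c * y a) + c * K / ε * (exp (ε * t) - exp (ε * a)) := by
  set φ : ℝ → ℝ := fun t => K / ε * exp (ε * t) - exp (c * y t) / c
  have hφ : ∀ t ≥ a, HasDerivAt φ (K * exp (ε * t) - exp (c * y t) * y' t) t := fun t ht => by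
    have hK : HasDerivAt (fun t => K / ε * exp (ε * t)) (K * exp (ε * t)) t :=
      (((hasDerivAt_id' t).const_mul ε).exp.const_mul (K / ε)).congr_deriv (by field_simp)
    have hY : HasDerivAt (fun t => exp (c * y t) / c) (exp (c * y t) * y' t) t :=
      (((hy t ht).const_mul c).exp.div_const c).congr_deriv (by field_simp)
    exact hK.sub hY
  have hmono : MonotoneOn φ (Ici a) :=
    monotoneOn_of_deriv_nonneg (convex_Ici a)
      (fun t ht => (hφ t ht).continuousAt.continuousWithinAt)
      (fun t ht => (hφ t (interior_subset ht)).differentiableAt.differentiableWithinAt)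
      (fun t ht => by
        rw [(hφ t (interior_subset ht)).deriv]
        linarith [hle t (interior_subset ht)])
  intro t ht
  have h := mul_le_mul_of_nonneg_left (hmono self_mem_Ici ht ht) hc.le
  simp only [φ, mul_sub, mul_div_cancel₀ _ hc.ne'] at h
  linear_combination h

theorem le_div_mul_add_log_of_exp_mul_deriv_le {y y' : ℝ → ℝ} {a c ε K : ℝ} (hc : 0 < c)
    (hε : 0 < ε) (hK : 0 ≤ K) (ha : 0 ≤ a) (hy : ∀ t ≥ a, HasDerivAt y (y' t) t)
    (hle : ∀ t ≥ a, exp (c * y t) * y' t ≤ K * exp (ε * t)) :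
    ∀ t ≥ a, y t ≤ ε / c * t + log (exp (c * y a) + c * K / ε) / c := by
  intro t ht
  have hB : 0 ≤ c * K / ε := by positivity
  have hexp : exp (c * y t) ≤ exp (ε * t + log (exp (c * y a) + c * K / ε)) := by
    rw [exp_add, exp_log (by positivity)]
    have h1 := exp_mul_le_of_exp_mul_deriv_le hc hε.ne' hy hle t ht
    have h2 : 1 ≤ exp (ε * t) := one_le_exp (by nlinarith)
    nlinarith [exp_pos (ε * a), exp_pos (c * y a)]
  have hlog := exp_le_exp.1 hexp
  rw [div_mul_eq_mul_div, ← add_div, le_div_iff₀ hc]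
  linarith

theorem limsup_one_div_mul_le {y : ℝ → ℝ} {a b : ℝ} (hy₀ : ∀ᶠ t in atTop, 0 ≤ y t)
    (hy : ∀ᶠ t in atTop, y t ≤ a * t + b) :
    limsup (fun t => 1 / t * y t) atTop ≤ a := by
  have hlim : Tendsto (fun t : ℝ => a + b * t⁻¹) atTop (𝓝 a) := by
    simpa using tendsto_const_nhds.add (tendsto_inv_atTop_zero.const_mul b)
  refine (limsup_le_limsup ?_ ?_ hlim.isBoundedUnder_le).trans hlim.limsup_eq.le
  · filter_upwards [hy, eventually_gt_atTop 0] with t hyt ht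
    calc 1 / t * y t ≤ 1 / t * (a * t + b) := by gcongr
      _ = a + b * t⁻¹ := by field_simp
  · refine isCoboundedUnder_le_of_eventually_le atTop (x := 0) ?_
    filter_upwards [hy₀, eventually_gt_atTop 0] with t hyt ht
    positivity

theorem nonpersistence_comparison_general
    (c ε x0 t0 : ℝ) (hc : 0 < c) (hε : 0 < ε) (hx0 : 0 < x0)
    (x : ℝ → ℝ) (hcont : ContinuousOn x (Set.Ici 0))
    (hxpos : ∀ t ≥ (0:ℝ), 0 < x t)
    (hineq : ∀ t ≥ t0,
      Real.log (x t) ≤ Real.log x0 + ε * t - c * ∫ s in (0:ℝ)..t, x s) :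
    limsup (fun t => (1 / t) * ∫ s in (0:ℝ)..t, x s) atTop ≤ ε / c := by
  -- start the comparison at a positive time, where the primitive is differentiable
  obtain ⟨hta, ha1⟩ : t0 ≤ max t0 1 ∧ 1 ≤ max t0 1 := ⟨le_max_left _ _, le_max_right _ _⟩
  have hy : ∀ t ≥ max t0 1, HasDerivAt (fun t => ∫ s in (0:ℝ)..t, x s) (x t) t := fun t ht =>
    hasDerivAt_integral_of_continuousOn_Ici hcont (by linarith)
  have hle : ∀ t ≥ max t0 1, exp (c * ∫ s in (0:ℝ)..t, x s) * x t ≤ x0 * exp (ε * t) :=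
    fun t ht => exp_mul_le_of_log_le (hxpos t (by linarith)) hx0 (hineq t (by linarith))
  refine limsup_one_div_mul_le ?_ <| (eventually_ge_atTop (max t0 1)).mono <|
    le_div_mul_add_log_of_exp_mul_deriv_le hc hε hx0.le (by linarith) hy hle
  filter_upwards [eventually_ge_atTop 0] with t ht
  exact intervalIntegral.integral_nonneg ht fun s hs => (hxpos s hs.1).le

/-- Deterministic comparison lemma in the proof of nonpersistence in the mean. -/
theorem nonpersistence_comparison
    (c ε x0 t0 : ℝ) (hc : 0 < c) (hε : 0 < ε) (hx0 : 0 < x0) (ht0 : 0 ≤ t0)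
    (x : ℝ → ℝ) (hcont : ContinuousOn x (Set.Ici 0))
    (hxpos : ∀ t ≥ (0:ℝ), 0 < x t)
    (hineq : ∀ t ≥ t0,
      Real.log (x t) ≤ Real.log x0 + ε * t - c * ∫ s in (0:ℝ)..t, x s) :
    limsup (fun t => (1 / t) * ∫ s in (0:ℝ)..t, x s) atTop ≤ ε / c :=
  nonpersistence_comparison_general c ε x0 t0 hc hε hx0 x hcont hxpos hineq
end
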